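/- arXiv:2102.02931 — 6 statements merged into one kernel-verified Lean document; each statement's English description precedes it below -/
import Mathlib

section
/- A matching M is fair if and only if it is induced by some cutoff scores, i.e., there exists a function d from projects to natural numbers such that every applicant is matched under M to the most preferred project (in her preference list) at which her score meets the cutoff d(p). -/
open Finset

/-- An instance of the two-sided matching problem: applicants `A` with strict preference
lists over acceptable projects, projects `P` with strict preference lists over
acceptable applicants (best first), and capacities. -/
structure MatchInst (A P : Type) where
  prefA : A → List P
  prefP : P → List A
  cap : P → ℕ

variable {A P : Type} [Fintype A] [Fintype P] [DecidableEq A] [DecidableEq P]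

/-- number of applicants matched to project `p` -/
def mcount (M : A → Option P) (p : P) : ℕ := (univ.filter fun a => M a = some p).card

/-- counts after adding one extra applicant to project `p` (the matching `M ∪ {(a,p)}`) -/
def addCount (M : A → Option P) (p : P) : P → ℕ :=
  fun q => mcount M q + if q = p then 1 else 0

/-- the matching `(M ∪ {(a,p)}) \ {(a, M(a))}` -/
def swap (M : A → Option P) (a : A) (p : P) : A → Option P := Function.update M a (some p)

/-- a feasibility function on (anonymous) distributions of applicants over projects,
satisfying the heredity property -/
def Heredity (f : (P → ℕ) → Prop) : Prop :=
  f (fun _ => 0) ∧ ∀ v w : P → ℕ, (∀ p, w p ≤ v p) → f v → f w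

namespace MatchInst

variable (I : MatchInst A P)

def accA (a : A) (p : P) : Prop := p ∈ I.prefA a
def accP (p : P) (a : A) : Prop := a ∈ I.prefP p
/-- rank of project `p` in applicant `a`'s list (0-indexed; lower is better) -/
def rkA (a : A) (p : P) : ℕ := (I.prefA a).idxOf p
/-- rank of applicant `a` in project `p`'s list (0-indexed; lower is better) -/
def rkP (p : P) (a : A) : ℕ := (I.prefP p).idxOf a
/-- score of applicant `a` at project `p`: `|A| - k + 1` if `a` is ranked `k`-th, `0` if unranked -/
def score (p : P) (a : A) : ℕ :=
  if a ∈ I.prefP p then Fintype.card A - (I.prefP p).idxOf a else 0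

def IsMatching (M : A → Option P) : Prop :=
  (∀ a p, M a = some p → I.accA a p ∧ I.accP p a) ∧ ∀ p, mcount M p ≤ I.cap p

/-- `a` strictly prefers project `p` to the assignment `o` (being unmatched is worst) -/
def Prefers (a : A) (p : P) (o : Option P) : Prop :=
  I.accA a p ∧ ∀ q, o = some q → I.rkA a p < I.rkA a q

/-- no justified envy -/
def Fair (M : A → Option P) : Prop :=
  ∀ a p, M a ≠ some p → I.Prefers a p (M a) →
    ∀ a', M a' = some p → I.rkP p a' < I.rkP p a

/-- applicant `a` is admissible at project `p` under cutoffs `d` -/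
def Adm (d : P → ℕ) (a : A) (p : P) : Prop :=
  I.accA a p ∧ I.accP p a ∧ d p ≤ I.score p a

/-- cutoffs `d` induce the matching `M`: every applicant is matched to her most
preferred project where she is admissible (and unmatched if there is none) -/
def Induces (d : P → ℕ) (M : A → Option P) : Prop :=
  ∀ a : A,
    (∀ p, M a = some p → I.Adm d a p ∧ ∀ q, I.Adm d a q → q ≠ p → I.rkA a p < I.rkA a q) ∧
    (M a = none → ∀ p, ¬ I.Adm d a p)

def Blocking (M : A → Option P) (a : A) (p : P) : Prop :=
  I.Prefers a p (M a) ∧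
    ((mcount M p < I.cap p ∧ I.accP p a) ∨ ∃ a', M a' = some p ∧ I.rkP p a < I.rkP p a')

def StronglyStable (f : (P → ℕ) → Prop) (M : A → Option P) : Prop :=
  I.IsMatching M ∧ f (mcount M) ∧
    ∀ a p, I.Blocking M a p →
      (∀ a', M a' = some p → I.rkP p a' < I.rkP p a) ∧ ¬ f (mcount (swap M a p))

/-- weak stability in terms of permitted blocking pairs -/
def WeaklyStableBlk (f : (P → ℕ) → Prop) (M : A → Option P) : Prop :=
  I.IsMatching M ∧ f (mcount M) ∧
    ∀ a p, I.Blocking M a p →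
      (∀ a', M a' = some p → I.rkP p a' < I.rkP p a) ∧ ¬ f (addCount M p)

def WeaklyNonWasteful (f : (P → ℕ) → Prop) (M : A → Option P) : Prop :=
  f (mcount M) ∧ ∀ a p, M a ≠ some p → I.accP p a → I.Prefers a p (M a) →
    ¬ f (addCount M p) ∨ I.cap p ≤ mcount M p

/-- weak stability as fairness plus weak non-wastefulness -/
def WeaklyStable (f : (P → ℕ) → Prop) (M : A → Option P) : Prop :=
  I.IsMatching M ∧ I.Fair M ∧ I.WeaklyNonWasteful f M

def CutoffNonWasteful (f : (P → ℕ) → Prop) (M : A → Option P) : Prop :=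
  f (mcount M) ∧ ∀ a p, M a ≠ some p → I.accP p a → I.Prefers a p (M a) →
    ¬ f (mcount (swap M a p)) ∨
    (∃ a', M a' ≠ some p ∧ I.accP p a' ∧ I.rkP p a' < I.rkP p a ∧
      I.Prefers a' p (M a') ∧ ¬ f (mcount (swap M a' p))) ∨
    I.cap p ≤ mcount M p

def CutoffStable (f : (P → ℕ) → Prop) (M : A → Option P) : Prop :=
  I.IsMatching M ∧ I.Fair M ∧ I.CutoffNonWasteful f M

/-- project `p` is unconstrained for `M`: one more applicant can be added to `p` feasibly -/
def Unconstrained (f : (P → ℕ) → Prop) (M : A → Option P) (p : P) : Prop :=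
  f (addCount M p)

/-- cutoffs after decreasing the cutoff of `p` by one -/
def decCut (d : P → ℕ) (p : P) : P → ℕ := Function.update d p (d p - 1)

/-- minimal cutoffs: no cutoff can be decreased keeping the induced matching feasible -/
def MinimalCutoffs (f : (P → ℕ) → Prop) (d : P → ℕ) : Prop :=
  ∀ p, d p = 0 ∨ ∀ M', I.Induces (decCut d p) M' → ¬ f (mcount M')

def StrictlyBetter (a : A) (o o' : Option P) : Prop :=
  ∃ p, o = some p ∧ I.accA a p ∧ ∀ q, o' = some q → I.rkA a p < I.rkA a q

def ParetoDominates (M' M : A → Option P) : Prop :=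
  (∀ a, M' a = M a ∨ I.StrictlyBetter a (M' a) (M a)) ∧
    ∃ a, I.StrictlyBetter a (M' a) (M a)

end MatchInst

/-! Fair matchings are induced by the cutoffs that sit at each project's lowest matched score:
by fairness, an applicant who prefers `p` to her assignment is ranked by `p` below everyone
matched there, so she scores strictly below that cutoff. Conversely, under inducing cutoffs such
an applicant is inadmissible at `p` while everyone matched to `p` is admissible, so they outscore
her, i.e. `p` ranks them higher. -/

namespace MatchInst

variable (I : MatchInst A P)

omit [Fintype P] [DecidableEq P] in
lemma score_le_card (p : P) (a : A) : I.score p a ≤ Fintype.card A := by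
  unfold score
  split <;> omega

omit [Fintype P] [DecidableEq P] in
lemma score_lt_score_iff_rkP_lt {p : P} {a a' : A} (hP : (I.prefP p).Nodup)
    (ha' : I.accP p a') : I.score p a < I.score p a' ↔ I.rkP p a' < I.rkP p a := by
  have ha'_lt : (I.prefP p).idxOf a' < (I.prefP p).length := List.idxOf_lt_length_iff.mpr ha'
  have hlen : (I.prefP p).length ≤ Fintype.card A := hP.length_le_card
  unfold score rkP
  rw [if_pos (show a' ∈ I.prefP p from ha')]
  by_cases ha : a ∈ I.prefP p
  · have ha_lt : (I.prefP p).idxOf a < (I.prefP p).length := List.idxOf_lt_length_iff.mpr ha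
    rw [if_pos ha]
    omega
  · rw [if_neg ha, List.idxOf_eq_length_iff.mpr ha]
    omega

variable {I}

omit [Fintype P] in
lemma induces_iff {d : P → ℕ} {M : A → Option P} :
    I.Induces d M ↔ ∀ a, (∀ p, M a = some p → I.Adm d a p) ∧
      ∀ q, M a ≠ some q → I.Prefers a q (M a) → ¬ I.Adm d a q := by
  refine forall_congr' fun a => ⟨fun ⟨hmatched, hnone⟩ => ⟨fun p hp => (hmatched p hp).1, ?_⟩,
    fun ⟨hadm, hnot⟩ => ⟨fun p hp => ⟨hadm p hp, ?_⟩, ?_⟩⟩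
  · intro q hne hpref hq
    cases hMa : M a with
    | none => exact hnone hMa q hq
    | some r =>
      have hqr : q ≠ r := fun h => hne (h ▸ hMa)
      exact absurd (hpref.2 r hMa) ((hmatched r hMa).2 q hq hqr).asymm
  · intro q hq hqp
    by_contra! hle
    have hne : I.rkA a q ≠ I.rkA a p := fun h => hqp ((List.idxOf_inj hq.1).mp h)
    refine hnot q (by rw [hp]; exact fun h => hqp (Option.some.inj h).symm) ⟨hq.1, ?_⟩ hq
    rw [hp]
    rintro r ⟨⟩
    omega
  · intro hnone q hq
    exact hnot q (by simp [hnone]) ⟨hq.1, by simp [hnone]⟩ hq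

omit [Fintype P] in
lemma Induces.fair {d : P → ℕ} {M : A → Option P} (hP : ∀ p, (I.prefP p).Nodup)
    (hd : I.Induces d M) : I.Fair M := by
  intro a p hne hpref a' ha'
  obtain ⟨-, haccP', hcut⟩ := (induces_iff.mp hd a').1 p ha'
  have hnot := (induces_iff.mp hd a).2 p hne hpref
  by_cases haccP : I.accP p a
  · rw [← I.score_lt_score_iff_rkP_lt (hP p) haccP']
    exact (not_le.mp fun h => hnot ⟨hpref.1, haccP, h⟩).trans_le hcut
  · rw [rkP, rkP, List.idxOf_eq_length_iff.mpr haccP]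
    exact List.idxOf_lt_length_iff.mpr haccP'

variable (I)

/-- `|A| + 1` exceeds every score, so it is the cutoff of a project with no matched applicant. -/
def minMatchedScore (M : A → Option P) (p : P) : ℕ :=
  (insert (Fintype.card A + 1) ((univ.filter fun a => M a = some p).image (I.score p))).min'
    (insert_nonempty _ _)

variable {I}

omit [Fintype P] in
lemma minMatchedScore_le_card_add_one (M : A → Option P) (p : P) :
    I.minMatchedScore M p ≤ Fintype.card A + 1 :=
  min'_le _ _ (mem_insert_self _ _)

omit [Fintype P] in
lemma minMatchedScore_le_score {M : A → Option P} {a : A} {p : P} (hap : M a = some p) :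
    I.minMatchedScore M p ≤ I.score p a :=
  min'_le _ _ (mem_insert_of_mem (mem_image_of_mem _ (mem_filter.mpr ⟨mem_univ a, hap⟩)))

omit [Fintype P] in
lemma minMatchedScore_eq_card_add_one_or_score (M : A → Option P) (p : P) :
    I.minMatchedScore M p = Fintype.card A + 1 ∨
      ∃ a, M a = some p ∧ I.minMatchedScore M p = I.score p a := by
  have hmem : I.minMatchedScore M p ∈ _ := min'_mem _ (insert_nonempty _ _)
  simpa [eq_comm] using hmem

omit [Fintype P] in
lemma score_lt_minMatchedScore_of_fair {M : A → Option P} (hP : ∀ p, (I.prefP p).Nodup)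
    (hM : I.IsMatching M) (hF : I.Fair M) {a : A} {p : P} (hne : M a ≠ some p)
    (hpref : I.Prefers a p (M a)) : I.score p a < I.minMatchedScore M p := by
  rcases minMatchedScore_eq_card_add_one_or_score M p with hmin | ⟨a₀, ha₀p, hmin⟩
  · rw [hmin]
    exact Nat.lt_succ_of_le (I.score_le_card p a)
  · rw [hmin, I.score_lt_score_iff_rkP_lt (hP p) (hM.1 a₀ p ha₀p).2]
    exact hF a p hne hpref a₀ ha₀p

omit [Fintype P] in
lemma induces_minMatchedScore_of_fair {M : A → Option P} (hP : ∀ p, (I.prefP p).Nodup)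
    (hM : I.IsMatching M) (hF : I.Fair M) : I.Induces (I.minMatchedScore M) M :=
  induces_iff.mpr fun _ =>
    ⟨fun p hp => ⟨(hM.1 _ p hp).1, (hM.1 _ p hp).2, minMatchedScore_le_score hp⟩,
      fun _ hne hpref hadm =>
        (score_lt_minMatchedScore_of_fair hP hM hF hne hpref).not_ge hadm.2.2⟩

end MatchInst

theorem fair_iff_induced_by_cutoffs_general (I : MatchInst A P) (M : A → Option P)
    (hP : ∀ p, (I.prefP p).Nodup)
    (hM : I.IsMatching M) :
    I.Fair M ↔ ∃ d : P → ℕ, (∀ p, d p ≤ Fintype.card A + 1) ∧ I.Induces d M :=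
  ⟨fun hF => ⟨I.minMatchedScore M, MatchInst.minMatchedScore_le_card_add_one M,
      MatchInst.induces_minMatchedScore_of_fair hP hM hF⟩,
    fun ⟨_, _, hd⟩ => hd.fair hP⟩

/-- A matching `M` is fair if and only if it is induced by some cutoff scores. -/
theorem fair_iff_induced_by_cutoffs (I : MatchInst A P) (M : A → Option P)
    (hA : ∀ a, (I.prefA a).Nodup) (hP : ∀ p, (I.prefP p).Nodup)
    (hM : I.IsMatching M) :
    I.Fair M ↔ ∃ d : P → ℕ, (∀ p, d p ≤ Fintype.card A + 1) ∧ I.Induces d M :=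
  fair_iff_induced_by_cutoffs_general I M hP hM
end

section
/- Every strongly stable matching is cutoff stable. -/
open Finset

variable {A P : Type} [Fintype A] [Fintype P] [DecidableEq A] [DecidableEq P]

/-! Strong stability only permits blocking pairs `(a, p)` in which `p` ranks all of `M(p)` above
`a`, so justified envy cannot occur. If `p` has a free seat, every applicant who prefers `p` and
is acceptable to it blocks `M`, so strong stability already makes the swap infeasible. -/

theorem List.idxOf_lt_or_gt_of_ne {α : Type*} [BEq α] [LawfulBEq α] {l : List α} {x y : α}
    (hx : x ∈ l) (hne : x ≠ y) : l.idxOf x < l.idxOf y ∨ l.idxOf y < l.idxOf x :=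
  Nat.lt_or_gt_of_ne fun h => hne ((List.idxOf_inj hx).1 h)

namespace MatchInst

variable {I : MatchInst A P} {f : (P → ℕ) → Prop} {M : A → Option P}

omit [Fintype P]

theorem StronglyStable.fair (hM : I.StronglyStable f M) : I.Fair M := by
  intro a p hne hpref a' ha'
  have hne' : a' ≠ a := fun h => hne (h ▸ ha')
  rcases List.idxOf_lt_or_gt_of_ne (hM.1.1 a' p ha').2 hne' with hlt | hgt
  · exact hlt
  · exact (hM.2.2 a p ⟨hpref, Or.inr ⟨a', ha', hgt⟩⟩).1 a' ha'

theorem StronglyStable.cutoffNonWasteful (hM : I.StronglyStable f M) :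
    I.CutoffNonWasteful f M := by
  refine ⟨hM.2.1, fun a p _ haccP hpref => ?_⟩
  by_cases hcap : mcount M p < I.cap p
  · exact Or.inl (hM.2.2 a p ⟨hpref, Or.inl ⟨hcap, haccP⟩⟩).2
  · exact Or.inr (Or.inr (Nat.le_of_not_lt hcap))

end MatchInst

theorem stronglyStable_implies_cutoffStable_general
    (I : MatchInst A P) (f : (P → ℕ) → Prop) (M : A → Option P) :
    I.StronglyStable f M → I.CutoffStable f M :=
  fun hM => ⟨hM.1, hM.fair, hM.cutoffNonWasteful⟩

/-- Every strongly stable matching is cutoff stable. -/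
theorem stronglyStable_implies_cutoffStable
    (I : MatchInst A P) (f : (P → ℕ) → Prop) (M : A → Option P)
    (hA : ∀ a, (I.prefA a).Nodup) (hP : ∀ p, (I.prefP p).Nodup) :
    I.StronglyStable f M → I.CutoffStable f M :=
  stronglyStable_implies_cutoffStable_general I f M
end

section
/- Every cutoff stable matching is weakly stable. -/
open Finset

variable {A P : Type} [Fintype A] [Fintype P] [DecidableEq A] [DecidableEq P]

/-! Moving an applicant `a` to `p` adds at most one applicant to `p` and none elsewhere, so the
counts of `(M ∪ {(a,p)}) \ {(a,M(a))}` are dominated by those of `M ∪ {(a,p)}`. By heredity,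
infeasibility of the swap then forces infeasibility of the addition, which turns each escape
clause of cutoff non-wastefulness into one of weak non-wastefulness. -/

omit [Fintype P] in
theorem mcount_swap_le_addCount (M : A → Option P) (a : A) (p q : P) :
    mcount (swap M a p) q ≤ addCount M p q := by
  unfold addCount mcount
  split_ifs with hqp
  · subst hqp
    calc #{b | swap M a q b = some q}
        ≤ #(insert a ({b | M b = some q} : Finset A)) := by
          refine card_le_card fun b hb => ?_
          rw [mem_filter_univ] at hb
          by_cases hba : b = a
          · rw [hba]
            exact mem_insert_self a _
          · rw [swap, Function.update_of_ne hba] at hb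
            exact mem_insert_of_mem ((mem_filter_univ b).2 hb)
      _ ≤ #{b | M b = some q} + 1 := card_insert_le _ _
  · refine card_le_card fun b hb => ?_
    rw [mem_filter_univ] at hb ⊢
    by_cases hba : b = a
    · subst hba
      rw [swap, Function.update_self] at hb
      exact absurd (Option.some_injective _ hb).symm hqp
    · rwa [swap, Function.update_of_ne hba] at hb

omit [Fintype P] in
theorem Heredity.mcount_swap {f : (P → ℕ) → Prop} (hf : Heredity f) {M : A → Option P}
    (a : A) {p : P} (h : f (addCount M p)) : f (mcount (swap M a p)) :=
  hf.2 _ _ (mcount_swap_le_addCount M a p) h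

/-- Every cutoff stable matching is weakly stable. -/
theorem cutoffStable_implies_weaklyStable
    (I : MatchInst A P) (f : (P → ℕ) → Prop) (M : A → Option P)
    (hf : Heredity f) :
    I.CutoffStable f M → I.WeaklyStable f M := by
  rintro ⟨hM, hfair, hfeas, hcnw⟩
  refine ⟨hM, hfair, hfeas, fun a p hap hacc hpref => ?_⟩
  rcases hcnw a p hap hacc hpref with hswap | ⟨a', -, -, -, -, hswap'⟩ | hfull
  · exact .inl fun hadd => hswap (hf.mcount_swap a hadd)
  · exact .inl fun hadd => hswap' (hf.mcount_swap a' hadd)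
  · exact .inr hfull
end

section
/- In the greedy cutoff-decreasing process, decreasing the cutoff of one project by one changes the induced matching by at most moving a single applicant: if M is induced by cutoffs d, p is a project with d(p) >= 1, and a is the applicant with score d(p)-1 at p (if any), then the matching induced by d^{-p} equals M if a does not prefer p to M(a), and equals (M ∪ {(a,p)}) \ {(a,M(a))} if a prefers p to M(a). -/
/-!
Lowering the cutoff of `p` by one makes at most one new applicant–project pair admissible,
namely `(a, p)`. Every applicant other than `a` therefore faces the same admissible set and keeps
her assignment, while `a` gains the single option `p`: she moves to it exactly when she prefers it
to `M a`, which is her best option so far.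
-/

open Finset

variable {A P : Type} [Fintype A] [Fintype P] [DecidableEq A] [DecidableEq P]

namespace MatchInst

variable (I : MatchInst A P)

section TopChoice

omit [Fintype A] [Fintype P] [DecidableEq A]

def IsTopChoice (b : A) (S : P → Prop) (o : Option P) : Prop :=
  (∀ p, o = some p → S p ∧ ∀ q, S q → q ≠ p → I.rkA b p < I.rkA b q) ∧
    (o = none → ∀ p, ¬ S p)

variable {I}

theorem rkA_lt_of_ne_of_not_prefers {b : A} {p q : P} (hp : I.accA b p) (hqp : q ≠ p)
    (hnp : ¬ I.Prefers b p (some q)) : I.rkA b q < I.rkA b p := by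
  have hle : I.rkA b q ≤ I.rkA b p := by
    by_contra! hlt
    exact hnp ⟨hp, fun q' hq' => Option.some_injective _ hq' ▸ hlt⟩
  exact hle.lt_of_ne fun h => hqp ((List.idxOf_inj hp).mp h.symm).symm

theorem IsTopChoice.of_not_prefers {b : A} {p : P} {S S' : P → Prop} {o : Option P}
    (h : I.IsTopChoice b S o) (hnp : ¬ I.Prefers b p o) (hsub : ∀ q, S q → S' q)
    (hnew : ∀ q, S' q → S q ∨ q = p) (hacc : ∀ q, S' q → I.accA b q) :
    I.IsTopChoice b S' o := by
  refine ⟨fun q hq => ⟨hsub q (h.1 q hq).1, fun r hr hrq => ?_⟩, fun ho r hr => ?_⟩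
  · rcases hnew r hr with hr | rfl
    · exact (h.1 q hq).2 r hr hrq
    · exact rkA_lt_of_ne_of_not_prefers (hacc r hr) hrq.symm (hq ▸ hnp)
  · rcases hnew r hr with hr | rfl
    · exact h.2 ho r hr
    · exact hnp ⟨hacc r hr, fun q hq => nomatch ho ▸ hq⟩

theorem IsTopChoice.some_of_prefers {b : A} {p : P} {S S' : P → Prop} {o : Option P}
    (h : I.IsTopChoice b S o) (hpref : I.Prefers b p o) (hp : S' p)
    (hnew : ∀ q, S' q → S q ∨ q = p) :
    I.IsTopChoice b S' (some p) := by
  refine ⟨fun q hq => ?_, nofun⟩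
  obtain rfl := Option.some_injective _ hq
  refine ⟨hp, fun r hr hrq => ?_⟩
  rcases hnew r hr with hr | rfl
  · cases o with
    | none => exact absurd hr (h.2 rfl r)
    | some q₀ =>
      have hlt := hpref.2 q₀ rfl
      rcases eq_or_ne r q₀ with rfl | hr₀
      · exact hlt
      · exact hlt.trans ((h.1 q₀ rfl).2 r hr hr₀)
  · exact absurd rfl hrq

end TopChoice

section Cutoffs

omit [Fintype P]

variable {I}

theorem induces_iff_isTopChoice {d : P → ℕ} {M : A → Option P} :
    I.Induces d M ↔ ∀ b, I.IsTopChoice b (I.Adm d b) (M b) :=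
  Iff.rfl

theorem decCut_le (d : P → ℕ) (p q : P) : decCut d p q ≤ d q := by
  rcases eq_or_ne q p with rfl | hqp
  · simp [decCut]
  · simp [decCut, Function.update_of_ne hqp]

omit [DecidableEq P] in
theorem Adm.anti {d d' : P → ℕ} {b : A} {q : P} (hd : ∀ r, d' r ≤ d r) (h : I.Adm d b q) :
    I.Adm d' b q :=
  ⟨h.1, h.2.1, (hd q).trans h.2.2⟩

theorem adm_decCut_self {d : P → ℕ} {b : A} {p : P} (hA : I.accA b p) (hP : I.accP p b)
    (hsc : I.score p b = d p - 1) : I.Adm (decCut d p) b p :=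
  ⟨hA, hP, by simp [decCut, hsc]⟩

theorem adm_or_of_adm_decCut {d : P → ℕ} {b : A} {p q : P} (h : I.Adm (decCut d p) b q) :
    I.Adm d b q ∨ (q = p ∧ I.score p b = d p - 1) := by
  obtain ⟨hA, hP, hle⟩ := h
  rcases eq_or_ne q p with rfl | hqp
  · simp only [decCut, Function.update_self] at hle
    by_cases hs : d q ≤ I.score q b
    · exact Or.inl ⟨hA, hP, hs⟩
    · exact Or.inr ⟨rfl, by omega⟩
  · rw [decCut, Function.update_of_ne hqp] at hle
    exact Or.inl ⟨hA, hP, hle⟩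

end Cutoffs

end MatchInst

open MatchInst in
theorem decrement_cutoff_moves_at_most_one_applicant_general
    (I : MatchInst A P) (M : A → Option P) (d : P → ℕ) (p : P) (a : A)
    (hind : I.Induces d M)
    (hacc : I.accP p a) (hsc : I.score p a = d p - 1)
    (huniq : ∀ a', I.accP p a' → I.score p a' = d p - 1 → a' = a) :
    (¬ I.Prefers a p (M a) → I.Induces (MatchInst.decCut d p) M) ∧
    (I.Prefers a p (M a) → I.Induces (MatchInst.decCut d p) (Function.update M a (some p))) := by
  have hold : ∀ b q, I.Adm d b q → I.Adm (decCut d p) b q := fun _ _ => Adm.anti (decCut_le d p)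
  have hnew : ∀ b q, I.Adm (decCut d p) b q → I.Adm d b q ∨ (b = a ∧ q = p) := by
    intro b q h
    rcases adm_or_of_adm_decCut h with h' | ⟨rfl, hs⟩
    · exact Or.inl h'
    · exact Or.inr ⟨huniq b h.2.1 hs, rfl⟩
  have hsame : ∀ b, b ≠ a → I.Adm (decCut d p) b = I.Adm d b := fun b hba =>
    funext fun q => propext ⟨fun h => (hnew b q h).resolve_right (hba ·.1), hold b q⟩
  have hnew_a : ∀ q, I.Adm (decCut d p) a q → I.Adm d a q ∨ q = p := fun q h =>
    (hnew a q h).imp_right And.right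
  rw [induces_iff_isTopChoice] at hind ⊢
  refine ⟨fun hnp b => ?_, fun hpref b => ?_⟩
  · rcases eq_or_ne b a with rfl | hba
    · exact (hind b).of_not_prefers hnp (hold b) hnew_a fun q h => h.1
    · exact hsame b hba ▸ hind b
  · rcases eq_or_ne b a with rfl | hba
    · rw [Function.update_self]
      exact (hind b).some_of_prefers hpref (adm_decCut_self hpref.1 hacc hsc) hnew_a
    · rw [Function.update_of_ne hba, hsame b hba]
      exact hind b

/-- decreasing the cutoff of one project by one changes the induced
matching by at most moving a single applicant. -/
theorem decrement_cutoff_moves_at_most_one_applicant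
    (I : MatchInst A P) (M : A → Option P) (d : P → ℕ) (p : P) (a : A)
    (hA : ∀ a, (I.prefA a).Nodup) (hP : ∀ p, (I.prefP p).Nodup)
    (hind : I.Induces d M) (hd : 1 ≤ d p)
    (hacc : I.accP p a) (hsc : I.score p a = d p - 1)
    (huniq : ∀ a', I.accP p a' → I.score p a' = d p - 1 → a' = a) :
    (¬ I.Prefers a p (M a) → I.Induces (MatchInst.decCut d p) M) ∧
    (I.Prefers a p (M a) → I.Induces (MatchInst.decCut d p) (Function.update M a (some p))) :=
  decrement_cutoff_moves_at_most_one_applicant_general I M d p a hind hacc hsc huniq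
end

section
/- Every weakly stable matching that is not cutoff stable is Pareto-dominated (for the applicants) by some cutoff stable matching. -/
open Finset

variable {A P : Type} [Fintype A] [Fintype P] [DecidableEq A] [DecidableEq P]

/-!
A fair feasible matching that is not cutoff non-wasteful admits a Pareto improvement that keeps
it fair and feasible: among the applicants acceptable to a project `p` below capacity who prefer
`p` to their assignment, move the one ranked best by `p` to `p`. The negation of cutoff non-wastefulness says exactly that this move is
feasible, and since nobody `p` ranks higher wants `p`, no justified envy is created. Pareto
domination is a strict order on the finite set of matchings, so a maximal fair feasible matching
dominating the given one exists, and by the improvement step it is cutoff stable.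
-/

omit [Fintype A] [Fintype P] [DecidableEq P] in
theorem swap_apply (M : A → Option P) (a : A) (p : P) (b : A) :
    swap M a p b = if b = a then some p else M b :=
  Function.update_apply ..

omit [Fintype P] in
theorem mcount_swap_self {M : A → Option P} {a : A} {p : P} (h : M a ≠ some p) :
    mcount (swap M a p) p = mcount M p + 1 := by
  have : univ.filter (swap M a p · = some p) = insert a (univ.filter (M · = some p)) := by
    ext b
    by_cases hb : b = a <;> simp [swap_apply, hb]
  rw [mcount, this, card_insert_of_notMem (by simpa using h), mcount]

omit [Fintype P] in
theorem mcount_swap_le {M : A → Option P} {a : A} {p q : P} (hq : q ≠ p) :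
    mcount (swap M a p) q ≤ mcount M q := by
  refine card_le_card fun b hb => ?_
  simp only [mem_filter, mem_univ, true_and, swap_apply] at hb ⊢
  split_ifs at hb
  · exact absurd (Option.some.inj hb).symm hq
  · exact hb

namespace MatchInst

variable (I : MatchInst A P)

def FairFeasible (f : (P → ℕ) → Prop) (M : A → Option P) : Prop :=
  I.IsMatching M ∧ I.Fair M ∧ f (mcount M)

variable {I}

omit [Fintype A] [Fintype P] [DecidableEq A] in
theorem StrictlyBetter.trans {a : A} {o₁ o₂ o₃ : Option P}
    (h₃₂ : I.StrictlyBetter a o₃ o₂) (h₂₁ : I.StrictlyBetter a o₂ o₁) :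
    I.StrictlyBetter a o₃ o₁ := by
  obtain ⟨p₃, rfl, hacc, h₃⟩ := h₃₂
  obtain ⟨p₂, rfl, -, h₂⟩ := h₂₁
  exact ⟨p₃, rfl, hacc, fun q hq => (h₃ p₂ rfl).trans (h₂ q hq)⟩

omit [Fintype A] [Fintype P] [DecidableEq A] in
theorem StrictlyBetter.irrefl (a : A) (o : Option P) : ¬ I.StrictlyBetter a o o := by
  rintro ⟨p, rfl, -, h⟩
  exact lt_irrefl _ (h p rfl)

omit [Fintype A] [Fintype P] [DecidableEq A] in
theorem ParetoDominates.trans {M₁ M₂ M₃ : A → Option P}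
    (h₃₂ : I.ParetoDominates M₃ M₂) (h₂₁ : I.ParetoDominates M₂ M₁) :
    I.ParetoDominates M₃ M₁ := by
  obtain ⟨hle₃₂, a, ha⟩ := h₃₂
  obtain ⟨hle₂₁, -⟩ := h₂₁
  have hle : ∀ b, M₃ b = M₁ b ∨ I.StrictlyBetter b (M₃ b) (M₁ b) := fun b => by
    rcases hle₃₂ b with h | h <;> rcases hle₂₁ b with h' | h'
    · exact .inl (h.trans h')
    · exact .inr (h ▸ h')
    · exact .inr (h' ▸ h)
    · exact .inr (h.trans h')
  refine ⟨hle, a, ?_⟩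
  rcases hle₂₁ a with h' | h'
  · exact h' ▸ ha
  · exact ha.trans h'

omit [Fintype A] [Fintype P] [DecidableEq A] in
theorem ParetoDominates.irrefl (M : A → Option P) : ¬ I.ParetoDominates M M :=
  fun ⟨_, a, ha⟩ => StrictlyBetter.irrefl a (M a) ha

omit [Fintype A] [Fintype P] [DecidableEq A] in
instance : IsTrans (A → Option P) I.ParetoDominates := ⟨fun _ _ _ h₁₂ h₂₃ => h₁₂.trans h₂₃⟩

omit [Fintype A] [Fintype P] [DecidableEq A] in
instance : Std.Irrefl I.ParetoDominates := ⟨ParetoDominates.irrefl⟩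

omit [Fintype A] [Fintype P] [DecidableEq A] in
theorem Prefers.ne {a : A} {p : P} {o : Option P} (h : I.Prefers a p o) : o ≠ some p :=
  fun ho => lt_irrefl _ (h.2 p ho)

omit [Fintype A] [Fintype P] [DecidableEq P] in
theorem rkP_lt_of_ne {p : P} {b c : A} (hb : I.accP p b) (hcb : c ≠ b)
    (hle : I.accP p c → I.rkP p b ≤ I.rkP p c) : I.rkP p b < I.rkP p c := by
  by_cases hc : I.accP p c
  · exact (hle hc).lt_of_ne fun h => hcb ((List.idxOf_inj hb).1 h).symm
  · have hb' := List.idxOf_lt_length_iff.2 hb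
    have hc' := List.idxOf_eq_length_iff.2 hc
    unfold rkP
    omega

omit [Fintype P] in
theorem IsMatching.swap {M : A → Option P} {b : A} {p : P} (hM : I.IsMatching M)
    (hpref : I.Prefers b p (M b)) (hacc : I.accP p b) (hcap : mcount M p < I.cap p) :
    I.IsMatching (swap M b p) := by
  refine ⟨fun c q hcq => ?_, fun q => ?_⟩
  · by_cases hcb : c = b
    · obtain rfl : p = q := by simpa [swap_apply, hcb] using hcq
      exact hcb ▸ ⟨hpref.1, hacc⟩
    · exact hM.1 c q (by simpa [swap_apply, hcb] using hcq)
  · by_cases hqp : q = p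
    · rw [hqp, mcount_swap_self hpref.ne]
      exact hcap
    · exact (mcount_swap_le hqp).trans (hM.2 q)

omit [Fintype A] [Fintype P] in
theorem Fair.swap {M : A → Option P} {b : A} {p : P} (hfair : I.Fair M)
    (hpref : I.Prefers b p (M b))
    (hbest : ∀ c, c ≠ b → I.Prefers c p (M c) → I.rkP p b < I.rkP p c) :
    I.Fair (swap M b p) := by
  intro c q hcq hcpref c' hc'
  by_cases hcb : c = b
  · subst hcb
    rw [swap_apply, if_pos rfl] at hcq hcpref
    have hqp : q ≠ p := fun h => hcq (h ▸ rfl)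
    have hc'c : c' ≠ c := fun h => hqp (by simpa [swap_apply, h] using hc'.symm)
    rw [swap_apply, if_neg hc'c] at hc'
    have hqc : I.Prefers c q (M c) :=
      ⟨hcpref.1, fun r hr => (hcpref.2 p rfl).trans (hpref.2 r hr)⟩
    exact hfair c q hqc.ne hqc c' hc'
  · rw [swap_apply, if_neg hcb] at hcq hcpref
    by_cases hc'b : c' = b
    · obtain rfl : p = q := by simpa [swap_apply, hc'b] using hc'
      exact hc'b ▸ hbest c hcb hcpref
    · rw [swap_apply, if_neg hc'b] at hc'
      exact hfair c q hcq hcpref c' hc'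

omit [Fintype A] [Fintype P] in
theorem paretoDominates_swap {M : A → Option P} {b : A} {p : P}
    (hpref : I.Prefers b p (M b)) : I.ParetoDominates (swap M b p) M := by
  have hb : I.StrictlyBetter b (swap M b p b) (M b) := ⟨p, by simp [swap_apply], hpref⟩
  refine ⟨fun c => ?_, b, hb⟩
  by_cases hcb : c = b
  · exact .inr (hcb ▸ hb)
  · exact .inl (by simp [swap_apply, hcb])

omit [Fintype P] in
theorem FairFeasible.exists_paretoDominates {f : (P → ℕ) → Prop} {M : A → Option P}
    (hM : I.FairFeasible f M) (hnc : ¬ I.CutoffNonWasteful f M) :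
    ∃ M', I.FairFeasible f M' ∧ I.ParetoDominates M' M := by
  classical
  obtain ⟨hmatch, hfair, hfeas⟩ := hM
  unfold CutoffNonWasteful at hnc
  push Not at hnc
  obtain ⟨a, p, -, hacc, hpref, hswap, hbetter, hcap⟩ := hnc hfeas
  obtain ⟨b, hbS, hbmin⟩ := (univ.filter fun c => I.accP p c ∧ I.Prefers c p (M c)).exists_min_image
    (I.rkP p) ⟨a, by simp [hacc, hpref]⟩
  simp only [mem_filter, mem_univ, true_and, and_imp] at hbS hbmin
  obtain ⟨hbacc, hbpref⟩ := hbS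
  have hbest : ∀ c, c ≠ b → I.Prefers c p (M c) → I.rkP p b < I.rkP p c :=
    fun c hcb hc => rkP_lt_of_ne hbacc hcb fun hacc' => hbmin c hacc' hc
  have hfeas' : f (mcount (swap M b p)) := by
    by_cases hba : b = a
    · exact hba ▸ hswap
    · exact hbetter b hbpref.ne hbacc (hbest a (Ne.symm hba) hpref) hbpref
  exact ⟨swap M b p, ⟨hmatch.swap hbpref hbacc hcap, hfair.swap hbpref hbest, hfeas'⟩,
    paretoDominates_swap hbpref⟩

theorem FairFeasible.exists_cutoffStable_paretoDominates {f : (P → ℕ) → Prop}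
    {M : A → Option P} (hM : I.FairFeasible f M) (hnc : ¬ I.CutoffNonWasteful f M) :
    ∃ M', I.CutoffStable f M' ∧ I.ParetoDominates M' M := by
  obtain ⟨M', ⟨hM', hdom⟩, hmax⟩ := (Finite.wellFounded_of_trans_of_irrefl I.ParetoDominates).has_min
    {M' | I.FairFeasible f M' ∧ I.ParetoDominates M' M} (hM.exists_paretoDominates hnc)
  refine ⟨M', ⟨hM'.1, hM'.2.1, by_contra fun hnc' => ?_⟩, hdom⟩
  obtain ⟨M'', hM'', hdom'⟩ := hM'.exists_paretoDominates hnc'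
  exact hmax M'' ⟨hM'', hdom'.trans hdom⟩ hdom'

end MatchInst

theorem weaklyStable_not_cutoffStable_dominated_general
    (I : MatchInst A P) (f : (P → ℕ) → Prop) (M : A → Option P)
    (hws : I.WeaklyStable f M) (hncs : ¬ I.CutoffStable f M) :
    ∃ M' : A → Option P, I.CutoffStable f M' ∧ I.ParetoDominates M' M := by
  obtain ⟨hmatch, hfair, hfeas, -⟩ := hws
  have hM : I.FairFeasible f M := ⟨hmatch, hfair, hfeas⟩
  exact hM.exists_cutoffStable_paretoDominates fun hcnw => hncs ⟨hmatch, hfair, hcnw⟩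

/-- Every weakly stable matching that is not cutoff stable is
Pareto-dominated (for the applicants) by some cutoff stable matching. -/
theorem weaklyStable_not_cutoffStable_dominated
    (I : MatchInst A P) (f : (P → ℕ) → Prop) (M : A → Option P)
    (hA : ∀ a, (I.prefA a).Nodup) (hP : ∀ p, (I.prefP p).Nodup)
    (hf : Heredity f)
    (hws : I.WeaklyStable f M) (hncs : ¬ I.CutoffStable f M) :
    ∃ M' : A → Option P, I.CutoffStable f M' ∧ I.ParetoDominates M' M :=
  weaklyStable_not_cutoffStable_dominated_general I f M hws hncs
end

section
/- The cutoff-decreasing algorithm is not strategyproof for applicants: in the instance with A = {a1,a2}, P = {p1,p2} each of capacity 1, one supervisor s supervising both projects with budget 1, preferences a1: p2,p1; a2: p2; p1: a2,a1; p2: a2,a1, and project processing order (p1,p2), the algorithm outputs {(a1,p1)}, but if a2 misreports her preference as p2,p1 the algorithm outputs {(a2,p2)}, which a2 strictly prefers to being unmatched. -/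
open Finset

variable {A P : Type} [Fintype A] [Fintype P] [DecidableEq A] [DecidableEq P]

section Algorithm

instance (I : MatchInst A P) (d : P → ℕ) (a : A) (p : P) : Decidable (I.Adm d a p) :=
  decidable_of_iff (p ∈ I.prefA a ∧ a ∈ I.prefP p ∧ d p ≤ I.score p a) Iff.rfl

variable [LinearOrder P]

/-- the matching induced by cutoffs `d`: each applicant goes to her most preferred
project where she is admissible -/
def MatchInst.inducedM (I : MatchInst A P) (d : P → ℕ) (a : A) : Option P :=
  ((univ.filter fun p => I.Adm d a p).sort (· ≤ ·)).argmin fun p => I.rkA a p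

/-- the cutoff of `p` can be decreased by one keeping the induced matching feasible -/
def MatchInst.DecStep (I : MatchInst A P) (f : (P → ℕ) → Prop) (d : P → ℕ) (p : P) : Prop :=
  1 ≤ d p ∧ f (mcount (I.inducedM (MatchInst.decCut d p)))

/-- one step of the cutoff-decreasing algorithm: decrement the cutoff of the first
project (w.r.t. the processing order `ord`) whose decrement keeps feasibility -/
def MatchInst.AlgStep (I : MatchInst A P) (f : (P → ℕ) → Prop) (ord : P → P → Prop)
    (d d' : P → ℕ) : Prop :=
  ∃ p, I.DecStep f d p ∧ (∀ q, ord q p → ¬ I.DecStep f d q) ∧ d' = MatchInst.decCut d p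

/-- the cutoff-decreasing algorithm outputs `M`: starting from cutoffs `|A|+1`
everywhere, a sequence of steps reaches minimal cutoffs inducing `M` -/
def MatchInst.Outputs (I : MatchInst A P) (f : (P → ℕ) → Prop) (ord : P → P → Prop)
    (M : A → Option P) : Prop :=
  ∃ d : P → ℕ, Relation.ReflTransGen (I.AlgStep f ord) (fun _ => Fintype.card A + 1) d ∧
    (∀ p, ¬ I.DecStep f d p) ∧ M = I.inducedM d

end Algorithm

/-- the truthful instance: `a1: p2,p1`; `a2: p2`; `p1: a2,a1`; `p2: a2,a1`; capacities 1 -/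
def I15 : MatchInst (Fin 2) (Fin 2) :=
  ⟨![[1, 0], [1]], ![[1, 0], [1, 0]], fun _ => 1⟩

/-- the instance where `a2` misreports her preferences as `p2,p1` -/
def I15' : MatchInst (Fin 2) (Fin 2) :=
  ⟨![[1, 0], [1, 0]], ![[1, 0], [1, 0]], fun _ => 1⟩

/-- feasibility: total size at most 1 (one supervisor of budget 1 for both projects) -/
def f15 : (Fin 2 → ℕ) → Prop := fun v => v 0 + v 1 ≤ 1

/-!
With the processing order `<` a step of the algorithm is determined by the current cutoffs, so
the output is the matching induced by the unique terminal cutoffs reachable from the start, and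
it suffices to exhibit one run. Truthfully, `p1`'s cutoff falls to `0`, admitting `a1`; lowering
`p2`'s cutoff would then also admit `a2`, exceeding the budget. After the misreport, the first
decrement seats `a2` at `p1` and a second one would seat `a1` there too, so `p2`'s cutoff is
lowered instead: `a2` moves to `p2`, and every further decrement is infeasible.
-/

open Relation

namespace MatchInst

variable [LinearOrder P] (I : MatchInst A P) {f : (P → ℕ) → Prop} {d d' : P → ℕ}

theorem adm_of_mem_inducedM {a : A} {p : P} (h : p ∈ I.inducedM d a) : I.Adm d a p := by
  simpa [Finset.mem_sort] using List.argmin_mem h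

theorem mem_inducedM_of_best {a : A} {p : P} (hp : I.Adm d a p)
    (hbest : ∀ q, I.Adm d a q → q ≠ p → I.rkA a p < I.rkA a q) : p ∈ I.inducedM d a := by
  have hmem : p ∈ (univ.filter fun q => I.Adm d a q).sort (· ≤ ·) := by simpa using hp
  obtain ⟨m, hm⟩ : ∃ m, I.inducedM d a = some m :=
    Option.ne_none_iff_exists'.mp (mt List.argmin_eq_none.mp (List.ne_nil_of_mem hmem))
  obtain rfl : m = p := by
    by_contra hne
    exact List.not_lt_of_mem_argmin hmem hm (hbest m (I.adm_of_mem_inducedM hm) hne)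
  exact hm

theorem inducedM_eq_of_induces {M : A → Option P} (h : I.Induces d M) : I.inducedM d = M := by
  funext a
  obtain ⟨hsome, hnone⟩ := h a
  cases hMa : M a with
  | none =>
    exact Option.eq_none_iff_forall_not_mem.mpr fun p hp => hnone hMa p (I.adm_of_mem_inducedM hp)
  | some p => exact I.mem_inducedM_of_best (hsome p hMa).1 (hsome p hMa).2

theorem algStep_rightUnique : Relator.RightUnique (I.AlgStep f (· < ·)) := by
  rintro d _ _ ⟨p, hp, hpmin, rfl⟩ ⟨q, hq, hqmin, rfl⟩
  rcases lt_trichotomy p q with h | rfl | h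
  · exact absurd hp (hqmin p h)
  · rfl
  · exact absurd hq (hpmin q h)

theorem eq_of_reflTransGen_of_forall_not_decStep {ord : P → P → Prop}
    (h : ReflTransGen (I.AlgStep f ord) d d') (hd : ∀ p, ¬ I.DecStep f d p) : d = d' := by
  rcases h.cases_head with rfl | ⟨_, ⟨p, hp, -⟩, -⟩
  · rfl
  · exact absurd hp (hd p)

theorem outputs_iff_of_run {M₀ : A → Option P}
    (hrun : ReflTransGen (I.AlgStep f (· < ·)) (fun _ => Fintype.card A + 1) d)
    (hstop : ∀ p, ¬ I.DecStep f d p) (hM₀ : I.Induces d M₀) (M : A → Option P) :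
    I.Outputs f (· < ·) M ↔ M = M₀ := by
  rw [← I.inducedM_eq_of_induces hM₀]
  constructor
  · rintro ⟨d', hrun', hstop', rfl⟩
    rcases hrun.total_of_right_unique I.algStep_rightUnique hrun' with h | h
    · rw [I.eq_of_reflTransGen_of_forall_not_decStep h hstop]
    · rw [I.eq_of_reflTransGen_of_forall_not_decStep h hstop']
  · rintro rfl
    exact ⟨d, hrun, hstop, rfl⟩

theorem decStep_iff_of_induces {p : P} {M : A → Option P} (h : I.Induces (decCut d p) M) :
    I.DecStep f d p ↔ 1 ≤ d p ∧ f (mcount M) := by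
  rw [DecStep, I.inducedM_eq_of_induces h]

theorem not_decStep_of_induces {p : P} {M : A → Option P} (h : I.Induces (decCut d p) M)
    (hf : ¬ f (mcount M)) : ¬ I.DecStep f d p :=
  fun hp => hf ((I.decStep_iff_of_induces h).1 hp).2

theorem algStep_of_induces {p : P} (M : A → Option P) (hfirst : ∀ q < p, ¬ I.DecStep f d q)
    (hd' : d' = decCut d p) (hpos : 1 ≤ d p) (hM : I.Induces d' M) (hf : f (mcount M)) :
    I.AlgStep f (· < ·) d d' :=
  ⟨p, (I.decStep_iff_of_induces (hd' ▸ hM)).2 ⟨hpos, hf⟩, hfirst, hd'⟩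

theorem algStep_bot_of_induces [OrderBot P] (M : A → Option P) (hd' : d' = decCut d ⊥)
    (hpos : 1 ≤ d ⊥) (hM : I.Induces d' M) (hf : f (mcount M)) : I.AlgStep f (· < ·) d d' :=
  I.algStep_of_induces M (fun _ h => absurd h not_lt_bot) hd' hpos hM hf

instance (M : A → Option P) : Decidable (I.Induces d M) := by
  unfold Induces; infer_instance

end MatchInst

open MatchInst

instance : DecidablePred f15 := fun v => inferInstanceAs (Decidable (v 0 + v 1 ≤ 1))

theorem I15_run :
    ReflTransGen (I15.AlgStep f15 (· < ·)) (fun _ => Fintype.card (Fin 2) + 1) ![0, 3] := by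
  have h₁ : I15.AlgStep f15 (· < ·) (fun _ => Fintype.card (Fin 2) + 1) ![2, 3] :=
    I15.algStep_bot_of_induces ![none, none] (by decide) (by decide) (by decide) (by decide)
  have h₂ : I15.AlgStep f15 (· < ·) ![2, 3] ![1, 3] :=
    I15.algStep_bot_of_induces ![some 0, none] (by decide) (by decide) (by decide) (by decide)
  have h₃ : I15.AlgStep f15 (· < ·) ![1, 3] ![0, 3] :=
    I15.algStep_bot_of_induces ![some 0, none] (by decide) (by decide) (by decide) (by decide)
  exact .tail (.tail (.single h₁) h₂) h₃

theorem I15_not_decStep : ∀ p, ¬ I15.DecStep f15 ![0, 3] p :=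
  Fin.forall_fin_two.mpr ⟨fun h => absurd h.1 (by decide),
    I15.not_decStep_of_induces (M := ![some 0, some 1]) (by decide) (by decide)⟩

theorem I15'_run :
    ReflTransGen (I15'.AlgStep f15 (· < ·)) (fun _ => Fintype.card (Fin 2) + 1) ![2, 2] := by
  have h₁ : I15'.AlgStep f15 (· < ·) (fun _ => Fintype.card (Fin 2) + 1) ![2, 3] :=
    I15'.algStep_bot_of_induces ![none, some 0] (by decide) (by decide) (by decide) (by decide)
  have h₀ : ¬ I15'.DecStep f15 ![2, 3] 0 :=
    I15'.not_decStep_of_induces (M := ![some 0, some 0]) (by decide) (by decide)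
  have h₂ : I15'.AlgStep f15 (· < ·) ![2, 3] ![2, 2] :=
    I15'.algStep_of_induces ![none, some 1] (p := 1)
      (Fin.forall_fin_two.mpr ⟨fun _ => h₀, (absurd · (lt_irrefl 1))⟩)
      (by decide) (by decide) (by decide) (by decide)
  exact .tail (.single h₁) h₂

theorem I15'_not_decStep : ∀ p, ¬ I15'.DecStep f15 ![2, 2] p :=
  Fin.forall_fin_two.mpr
    ⟨I15'.not_decStep_of_induces (M := ![some 0, some 1]) (by decide) (by decide),
      I15'.not_decStep_of_induces (M := ![some 1, some 1]) (by decide) (by decide)⟩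

/-- the cutoff-decreasing algorithm (processing order `(p1, p2)`) is not
strategyproof: truthfully it outputs `{(a1,p1)}`, but if `a2` misreports it outputs
`{(a2,p2)}`, which `a2` strictly prefers to being unmatched. -/
theorem algorithm_not_strategyproof :
    (∀ M, I15.Outputs f15 (· < ·) M ↔ M = ![some 0, none]) ∧
    (∀ M, I15'.Outputs f15 (· < ·) M ↔ M = ![none, some 1]) ∧
    I15.Prefers 1 1 none :=
  ⟨I15.outputs_iff_of_run I15_run I15_not_decStep (by decide),
    I15'.outputs_iff_of_run I15'_run I15'_not_decStep (by decide),
    ⟨List.mem_singleton_self _, fun _ h => nomatch h⟩⟩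
end
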